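/- arXiv:2512.04610 — 2 statements merged into one kernel-verified Lean document; each statement's English description precedes it below -/
import Mathlib

section
/- Let G be a graph with no K_{t₀,t₀} subgraph, let r = 2r'+1 be odd, and let F = (P₁,P₂) be a flip. Suppose u₁,…,u_{t₀}, v₁,…,v_{t₀} are 2t₀ distinct vertices such that for each i the pair (v_i,u_i) is joined in G by a path of length at most r whose only edge between P₁ and P₂ is a single edge a_i b_i with a_i ∈ P₁, b_i ∈ P₂, where the segment from v_i to a_i has length exactly r' and the segment from b_i to u_i has length at most r', and all the a_i's are distinct and all the b_i's are distinct, and in G ⊕ F all pairwise distances among {u₁,…,u_{t₀},v₁,…,v_{t₀}} exceed r. Then {a₁,…,a_{t₀}} and {b₁,…,b_{t₀}} form a complete bipartite subgraph K_{t₀,t₀} in G — a contradiction; hence this configuration is impossible. -/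
/-- The flip of a graph `G` on a pair of vertex sets `(A, B)`: the adjacency between
every pair of distinct vertices `u ∈ A`, `v ∈ B` is complemented. -/
def gflip {V : Type*} (G : SimpleGraph V) (A B : Set V) : SimpleGraph V where
  Adj u v := u ≠ v ∧ Xor' (G.Adj u v) ((u ∈ A ∧ v ∈ B) ∨ (u ∈ B ∧ v ∈ A))
  symm := by
    constructor
    intro u v hx
    obtain ⟨h, hx⟩ := hx
    refine ⟨h.symm, ?_⟩
    have hGA : G.Adj v u ↔ G.Adj u v := ⟨fun h => h.symm, fun h => h.symm⟩
    unfold Xor' at *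
    unfold Xor at *
    tauto
  loopless := by constructor; intro v hx; exact hx.1 rfl

/-- `G` contains `K_{t,t}` as a subgraph. -/
def HasBiclique {V : Type*} (G : SimpleGraph V) (t : ℕ) : Prop :=
  ∃ X Y : Finset V, Disjoint X Y ∧ X.card = t ∧ Y.card = t ∧
    ∀ x ∈ X, ∀ y ∈ Y, G.Adj x y

/-!
If some `aᵢ` and `bⱼ` were non-adjacent in `G`, the flip would make them adjacent. The
segments `vᵢ — aᵢ` and `bⱼ — uⱼ` meet `P₁ ∪ P₂` only at `aᵢ` and `bⱼ`, so none of their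
edges is flipped; together with the new edge `aᵢbⱼ` they give a walk of length at most
`r' + 1 + r' = r` from `vᵢ` to `uⱼ ≠ vᵢ` in `G ⊕ F`, which is impossible. Hence every `aᵢ`
is adjacent to every `bⱼ`, and the `aᵢ`, `bⱼ` span a `K_{t₀,t₀}` in `G`.
-/

open SimpleGraph

section

variable {V : Type*} {G : SimpleGraph V} {A B : Set V}

lemma gflip_adj_of_not_adj {x y : V} (hx : x ∈ A) (hy : y ∈ B) (hxy : x ≠ y)
    (h : ¬ G.Adj x y) : (gflip G A B).Adj x y :=
  ⟨hxy, Or.inr ⟨Or.inl ⟨hx, hy⟩, h⟩⟩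

lemma gflip_adj_of_adj {x y : V} (h : G.Adj x y)
    (hxy : ¬ ((x ∈ A ∧ y ∈ B) ∨ (x ∈ B ∧ y ∈ A))) : (gflip G A B).Adj x y :=
  ⟨h.ne, Or.inl ⟨h, hxy⟩⟩

/-- A walk that meets `A ∪ B` in at most one vertex uses no edge between `A` and `B`,
so it survives the flip. -/
lemma SimpleGraph.Walk.edges_subset_gflip_edgeSet {x y c : V} (p : G.Walk x y)
    (h : ∀ w ∈ p.support, w ∈ A ∪ B → w = c) :
    ∀ e ∈ p.edges, e ∈ (gflip G A B).edgeSet := by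
  intro e he
  induction e using Sym2.ind with
  | _ x' y' =>
    have hadj : G.Adj x' y' := p.adj_of_mem_edges he
    have hx := h x' (p.fst_mem_support_of_mem_edges he)
    have hy := h y' (p.snd_mem_support_of_mem_edges he)
    refine gflip_adj_of_adj hadj ?_
    rintro (⟨h1, h2⟩ | ⟨h1, h2⟩)
    · exact hadj.ne ((hx (Or.inl h1)).trans (hy (Or.inr h2)).symm)
    · exact hadj.ne ((hx (Or.inr h1)).trans (hy (Or.inl h2)).symm)

lemma exists_gflip_walk_length_le {x y a b : V} (ha : a ∈ A) (hb : b ∈ B)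
    (hab : ¬ G.Adj a b) (p : G.Walk x a) (hp : ∀ w ∈ p.support, w ∈ A ∪ B → w = a)
    (q : G.Walk b y) (hq : ∀ w ∈ q.support, w ∈ A ∪ B → w = b) :
    ∃ W : (gflip G A B).Walk x y, W.length ≤ p.length + q.length + 1 := by
  let p' := p.transfer (gflip G A B) (p.edges_subset_gflip_edgeSet hp)
  let q' := q.transfer (gflip G A B) (q.edges_subset_gflip_edgeSet hq)
  by_cases heq : a = b
  · refine ⟨p'.append (q'.copy heq.symm rfl), ?_⟩
    simp [p', q']
  · refine ⟨p'.append (.cons (gflip_adj_of_not_adj ha hb heq hab) q'), ?_⟩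
    simp only [p', q', Walk.length_append, Walk.length_cons, Walk.length_transfer]
    omega

lemma hasBiclique_of_forall_adj {ι : Type*} [Fintype ι] {a b : ι → V}
    (ha : Function.Injective a) (hb : Function.Injective b)
    (hadj : ∀ i j, G.Adj (a i) (b j)) : HasBiclique G (Fintype.card ι) := by
  classical
  refine ⟨Finset.univ.image a, Finset.univ.image b, ?_,
    Finset.card_image_of_injective _ ha, Finset.card_image_of_injective _ hb, ?_⟩
  · simp only [Finset.disjoint_left, Finset.mem_image, Finset.mem_univ, true_and,
      forall_exists_index, forall_apply_eq_imp_iff, not_exists]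
    exact fun i j h => (hadj i j).ne h.symm
  · simp only [Finset.mem_image, Finset.mem_univ, true_and, forall_exists_index,
      forall_apply_eq_imp_iff]
    exact hadj

end

theorem odd_case_impossible_general {V : Type*} (G : SimpleGraph V) (t₀ r' : ℕ)
    (P₁ P₂ : Set V) (u v a b : Fin t₀ → V)
    (hinj : Function.Injective (Sum.elim u v : Fin t₀ ⊕ Fin t₀ → V))
    (ha_inj : Function.Injective a) (hb_inj : Function.Injective b)
    (haP : ∀ i, a i ∈ P₁) (hbP : ∀ i, b i ∈ P₂)
    (hwalk1 : ∀ i, ∃ p : G.Walk (v i) (a i), p.length = r' ∧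
      ∀ w ∈ p.support, w ∈ P₁ ∪ P₂ → w = a i)
    (hwalk2 : ∀ i, ∃ p : G.Walk (b i) (u i), p.length ≤ r' ∧
      ∀ w ∈ p.support, w ∈ P₁ ∪ P₂ → w = b i)
    (hfar : ∀ x ∈ Set.range u ∪ Set.range v, ∀ y ∈ Set.range u ∪ Set.range v,
      x ≠ y → ∀ p : (gflip G P₁ P₂).Walk x y, 2 * r' + 1 < p.length)
    (hKtt : ¬ HasBiclique G t₀) :
    False := by
  have hadj : ∀ i j, G.Adj (a i) (b j) := by
    intro i j
    by_contra hnot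
    obtain ⟨p, hp, hpP⟩ := hwalk1 i
    obtain ⟨q, hq, hqP⟩ := hwalk2 j
    obtain ⟨W, hW⟩ := exists_gflip_walk_length_le (haP i) (hbP j) hnot p hpP q hqP
    have hvu : v i ≠ u j := fun h => Sum.inr_ne_inl (hinj h)
    have := hfar _ (Or.inr ⟨i, rfl⟩) _ (Or.inl ⟨j, rfl⟩) hvu W
    omega
  exact hKtt (Fintype.card_fin t₀ ▸ hasBiclique_of_forall_adj ha_inj hb_inj hadj)

/-- The odd-radius case configuration is impossible: in a `K_{t₀,t₀}`-free graph, one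
cannot have `2t₀` distinct vertices `u₁,…,u_{t₀},v₁,…,v_{t₀}` joined by paths of length
at most `r = 2r'+1`, each crossing the flip `(P₁,P₂)` at a single edge `aᵢbᵢ`, with the
segment `vᵢ—aᵢ` of length exactly `r'` and the segment `bᵢ—uᵢ` of length at most `r'`,
while all pairwise distances among those vertices exceed `r` after the flip. -/
theorem odd_case_impossible {V : Type*} (G : SimpleGraph V) (t₀ r' : ℕ) (ht₀ : 0 < t₀)
    (P₁ P₂ : Set V) (u v a b : Fin t₀ → V)
    (hinj : Function.Injective (Sum.elim u v : Fin t₀ ⊕ Fin t₀ → V))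
    (ha_inj : Function.Injective a) (hb_inj : Function.Injective b)
    (haP : ∀ i, a i ∈ P₁) (hbP : ∀ i, b i ∈ P₂)
    (hab : ∀ i, G.Adj (a i) (b i))
    (hwalk1 : ∀ i, ∃ p : G.Walk (v i) (a i), p.length = r' ∧
      ∀ w ∈ p.support, w ∈ P₁ ∪ P₂ → w = a i)
    (hwalk2 : ∀ i, ∃ p : G.Walk (b i) (u i), p.length ≤ r' ∧
      ∀ w ∈ p.support, w ∈ P₁ ∪ P₂ → w = b i)
    (hfar : ∀ x ∈ Set.range u ∪ Set.range v, ∀ y ∈ Set.range u ∪ Set.range v,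
      x ≠ y → ∀ p : (gflip G P₁ P₂).Walk x y, 2 * r' + 1 < p.length)
    (hKtt : ¬ HasBiclique G t₀) :
    False :=
  odd_case_impossible_general G t₀ r' P₁ P₂ u v a b hinj ha_inj hb_inj haP hbP hwalk1 hwalk2 hfar
    hKtt
end

section
/- A class of graphs 𝒞 is weakly sparse and strongly flip-flat if and only if 𝒞 is uniformly almost-wide. -/
/-- Applying a list of flips to `G`. -/
def gflipAll {V : Type*} (G : SimpleGraph V) (L : List (Set V × Set V)) : SimpleGraph V :=
  L.foldl (fun H F => gflip H F.1 F.2) G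

/-- `B` is `r`-independent in `H`. -/
def RIndep {V : Type*} (H : SimpleGraph V) (r : ℕ) (B : Set V) : Prop :=
  ∀ u ∈ B, ∀ v ∈ B, u ≠ v → ∀ p : H.Walk u v, r < p.length

/-- `B` is `r`-independent in `G \ S`. -/
def RIndepAvoid {V : Type*} (G : SimpleGraph V) (r : ℕ) (S B : Set V) : Prop :=
  ∀ u ∈ B, ∀ v ∈ B, u ≠ v → ∀ p : G.Walk u v,
    (∀ w ∈ p.support, w ∉ S) → r < p.length

/-- A class of (finite) graphs `C` is uniformly almost-wide with separator-size constant
`s` and margin functions `N r`: for every radius `r`, size `m`, graph `G ∈ C`, and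
`A ⊆ V(G)` with `|A| ≥ N r m`, there are `S` with `|S| ≤ s` and `B ⊆ A` with `|B| ≥ m`
such that `B` is `r`-independent in `G \ S`. -/
def UAW (C : ∀ n : ℕ, SimpleGraph (Fin n) → Prop) (s : ℕ) (N : ℕ → ℕ → ℕ) : Prop :=
  ∀ (r m n : ℕ) (G : SimpleGraph (Fin n)), C n G →
    ∀ A : Finset (Fin n), N r m ≤ A.card →
      ∃ S : Finset (Fin n), S.card ≤ s ∧
        ∃ B ⊆ A, m ≤ B.card ∧ Disjoint B S ∧ RIndepAvoid G r ↑S ↑B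

/-- A class of (finite) graphs `C` is strongly flip-flat with flip-number `s` and margin
functions `N r`: for every radius `r`, size `m`, graph `G ∈ C`, and `A ⊆ V(G)` with
`|A| ≥ N r m`, there are a set of at most `s` flips `ℱ` and `B ⊆ A` with `|B| ≥ m`
such that `B` is `r`-independent in `G ⊕ ℱ`. -/
def SFF (C : ∀ n : ℕ, SimpleGraph (Fin n) → Prop) (s : ℕ) (N : ℕ → ℕ → ℕ) : Prop :=
  ∀ (r m n : ℕ) (G : SimpleGraph (Fin n)), C n G →
    ∀ A : Finset (Fin n), N r m ≤ A.card →
      ∃ L : List (Set (Fin n) × Set (Fin n)), L.length ≤ s ∧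
        ∃ B ⊆ A, m ≤ B.card ∧ RIndep (gflipAll G L) r ↑B

/-- `C` is weakly sparse: some biclique `K_{t,t}` is excluded as a subgraph by all
members of `C`. -/
def WeaklySparse (C : ∀ n : ℕ, SimpleGraph (Fin n) → Prop) : Prop :=
  ∃ t : ℕ, ∀ (n : ℕ) (G : SimpleGraph (Fin n)), C n G → ¬ HasBiclique G t

/-- `C` is strongly flip-flat: for some `s` and margin functions `N`. -/
def StronglyFlipFlat (C : ∀ n : ℕ, SimpleGraph (Fin n) → Prop) : Prop :=
  ∃ (s : ℕ) (N : ℕ → ℕ → ℕ), SFF C s N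

/-- `C` is uniformly almost-wide: for some `s` and margin functions `N`. -/
def UniformlyAlmostWide (C : ∀ n : ℕ, SimpleGraph (Fin n) → Prop) : Prop :=
  ∃ (s : ℕ) (N : ℕ → ℕ → ℕ), UAW C s N

/-!
Deleting a set `S` is simulated by the `|S|` flips `({w}, N(w))`, `w ∈ S`: a pair with exactly
one end in `S` is toggled once if it is an edge and never otherwise, so every edge leaving `S`
disappears. Hence uniform almost-wideness gives strong flip-flatness; it also gives weak sparseness,
because in `K_{t,t}` with `t` larger than the number of deleted vertices any two vertices stay at
distance at most `2`.

Conversely, a list of `s` flips splits the vertices into at most `4 ^ s` classes according to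
their membership in the flipped sets, and whether a pair is toggled an odd number of times depends
only on the classes of its ends. Delete the small classes and the vertices with fewer than `t`
non-neighbours in some large class; in a `K_{t,t}`-free graph there are fewer than `t` of the
latter for each class. A remaining edge `ab` that was flipped away is replaced by a path of length
at most `3` in the flipped graph: `a` is adjacent there to its non-neighbours `X` in the class of
`b`, and `b` to its non-neighbours `Y` in the class of `a`; either `X` and `Y` meet, or, as both
have `t` elements, some non-edge between them is an edge of the flipped graph. So distance `r` in
`G \ S` becomes distance at most `3r` after the flips.
-/

open Classical SimpleGraph Finset

variable {V : Type*}

def Toggles (F : Set V × Set V) (u v : V) : Prop :=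
  (u ∈ F.1 ∧ v ∈ F.2) ∨ (u ∈ F.2 ∧ v ∈ F.1)

def FlipParity : List (Set V × Set V) → V → V → Prop
  | [], _, _ => False
  | F :: L, u, v => Xor (Toggles F u v) (FlipParity L u v)

theorem gflipAll_adj (G : SimpleGraph V) (L : List (Set V × Set V)) (u v : V) :
    (gflipAll G L).Adj u v ↔ u ≠ v ∧ Xor (G.Adj u v) (FlipParity L u v) := by
  induction L generalizing G with
  | nil =>
    simp only [gflipAll, List.foldl_nil, FlipParity, xor_def, not_false_eq_true, and_true,
      false_and, or_false, iff_and_self]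
    exact G.ne_of_adj
  | cons F L ih =>
    change (gflipAll (gflip G F.1 F.2) L).Adj u v ↔ _
    rw [ih]
    change u ≠ v ∧ Xor (u ≠ v ∧ Xor (G.Adj u v) (Toggles F u v)) _ ↔ _
    simp only [FlipParity, xor_def]
    tauto

theorem flipParity_comm (L : List (Set V × Set V)) (u v : V) :
    FlipParity L u v ↔ FlipParity L v u := by
  induction L with
  | nil => rfl
  | cons F L ih => simp only [FlipParity, Toggles, xor_def, ih]; tauto

theorem flipParity_congr {L : List (Set V × Set V)} {u v u' v' : V}
    (h : ∀ F ∈ L, Toggles F u v ↔ Toggles F u' v') : FlipParity L u v ↔ FlipParity L u' v' := by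
  induction L with
  | nil => rfl
  | cons F L ih =>
    simp only [List.mem_cons, forall_eq_or_imp] at h
    simp only [FlipParity, h.1, ih h.2]

def flipProfile (L : List (Set V × Set V)) (u : V) : Fin L.length → Prop × Prop :=
  fun i => (u ∈ L[i].1, u ∈ L[i].2)

theorem flipParity_congr_of_flipProfile {L : List (Set V × Set V)} {u v u' v' : V}
    (hu : flipProfile L u = flipProfile L u') (hv : flipProfile L v = flipProfile L v') :
    FlipParity L u v ↔ FlipParity L u' v' := by
  refine flipParity_congr fun F hF => ?_
  obtain ⟨i, hi, rfl⟩ := List.mem_iff_getElem.1 hF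
  obtain ⟨hu₁, hu₂⟩ := Prod.mk.inj (congrFun hu ⟨i, hi⟩)
  obtain ⟨hv₁, hv₂⟩ := Prod.mk.inj (congrFun hv ⟨i, hi⟩)
  simp only [Fin.getElem_fin] at hu₁ hu₂ hv₁ hv₂
  simp only [Toggles, hu₁, hu₂, hv₁, hv₂]

theorem card_image_flipProfile_le [Fintype V] (L : List (Set V × Set V)) :
    #(univ.image (flipProfile L)) ≤ 4 ^ L.length :=
  (card_le_univ _).trans_eq (by simp [Fintype.card_prop])

theorem hasBiclique_of_forall_card_nonadj_le {G : SimpleGraph V} {t k : ℕ} {W Z : Finset V}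
    (hW : t ≤ #W) (hZ : t * k + t ≤ #Z) (hWZ : Disjoint W Z)
    (hdeg : ∀ w ∈ W, #{x ∈ Z | ¬G.Adj w x} ≤ k) : HasBiclique G t := by
  obtain ⟨X, hXW, hX⟩ := exists_subset_card_eq hW
  set bad := X.biUnion fun w => {x ∈ Z | ¬G.Adj w x}
  have hbad : #bad ≤ t * k := hX ▸ card_biUnion_le_card_mul _ _ _ fun w hw => hdeg w (hXW hw)
  have hgood : t ≤ #(Z \ bad) := by
    have := card_le_card_sdiff_add_card (s := Z) (t := bad)
    omega
  obtain ⟨Y, hYZ, hY⟩ := exists_subset_card_eq hgood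
  refine ⟨X, Y, (hWZ.mono hXW (hYZ.trans sdiff_subset)), hX, hY, fun x hx y hy => ?_⟩
  have hy' := mem_sdiff.1 (hYZ hy)
  by_contra hxy
  exact hy'.2 (mem_biUnion.2 ⟨x, hx, mem_filter.2 ⟨hy'.1, hxy⟩⟩)

theorem exists_not_adj_of_not_hasBiclique {G : SimpleGraph V} {t : ℕ} (hG : ¬HasBiclique G t)
    {X Y : Finset V} (hX : t ≤ #X) (hY : t ≤ #Y) (hXY : Disjoint X Y) :
    ∃ x ∈ X, ∃ y ∈ Y, ¬G.Adj x y := by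
  obtain ⟨X', hX'X, hX'⟩ := exists_subset_card_eq hX
  obtain ⟨Y', hY'Y, hY'⟩ := exists_subset_card_eq hY
  by_contra! h
  exact hG ⟨X', Y', hXY.mono hX'X hY'Y, hX', hY', fun x hx y hy => h x (hX'X hx) y (hY'Y hy)⟩

noncomputable def nonAdjIn (G : SimpleGraph V) (Q : Finset V) (a : V) : Finset V :=
  {x ∈ Q | x ≠ a ∧ ¬G.Adj a x}

theorem card_filter_card_nonAdjIn_lt [Fintype V] {G : SimpleGraph V} {t : ℕ}
    (hG : ¬HasBiclique G t) {Q : Finset V} (hQ : t * t + 2 * t ≤ #Q) :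
    #{a | #(nonAdjIn G Q a) < t} < t := by
  by_contra! h
  obtain ⟨W, hW, hWt⟩ := exists_subset_card_eq h
  refine hG (hasBiclique_of_forall_card_nonadj_le (Z := Q \ W) (k := t) hWt.ge ?_
    disjoint_sdiff fun w hw => ?_)
  · have := card_le_card_sdiff_add_card (s := Q) (t := W)
    omega
  · refine (card_le_card fun x hx => ?_).trans (mem_filter.1 (hW hw)).2.le
    obtain ⟨hxQW, hwx⟩ := mem_filter.1 hx
    obtain ⟨hxQ, hxW⟩ := mem_sdiff.1 hxQW
    exact mem_filter.2 ⟨hxQ, fun h => hxW (h ▸ hw), hwx⟩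

theorem exists_walk_length_le_mul_length {G H : SimpleGraph V} {S : Set V} {k : ℕ}
    (h : ∀ a b, a ∉ S → b ∉ S → G.Adj a b → ∃ w : H.Walk a b, w.length ≤ k) {u v : V}
    (p : G.Walk u v) (hp : ∀ x ∈ p.support, x ∉ S) :
    ∃ w : H.Walk u v, w.length ≤ k * p.length := by
  induction p with
  | nil => exact ⟨Walk.nil, by simp⟩
  | cons hadj p ih =>
    simp only [Walk.support_cons, List.mem_cons, forall_eq_or_imp] at hp
    obtain ⟨w₁, hw₁⟩ := h _ _ hp.1 (hp.2 _ p.start_mem_support) hadj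
    obtain ⟨w₂, hw₂⟩ := ih hp.2
    refine ⟨w₁.append w₂, ?_⟩
    rw [Walk.length_append, Walk.length_cons, mul_add_one]
    omega

section Separator

variable [Fintype V]

noncomputable def flipClass (L : List (Set V × Set V)) (u : V) : Finset V :=
  {x | flipProfile L x = flipProfile L u}

theorem card_image_flipClass_le (L : List (Set V × Set V)) :
    #(univ.image (flipClass L)) ≤ 4 ^ L.length := by
  rw [show flipClass L = (fun p => ({x | flipProfile L x = p} : Finset V)) ∘ flipProfile L from rfl,
    ← image_image]
  exact card_image_le.trans (card_image_flipProfile_le L)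

-- The threshold `t * t + 2 * t` for large classes is what `card_filter_card_nonAdjIn_lt` needs.
noncomputable def flipSeparator (G : SimpleGraph V) (L : List (Set V × Set V)) (t : ℕ) :
    Finset V :=
  {a | #(flipClass L a) < t * t + 2 * t ∨
    ∃ b, t * t + 2 * t ≤ #(flipClass L b) ∧ #(nonAdjIn G (flipClass L b) a) < t}

theorem card_flipSeparator_le {G : SimpleGraph V} {t : ℕ} (hG : ¬HasBiclique G t)
    (L : List (Set V × Set V)) :
    #(flipSeparator G L t) ≤ 4 ^ L.length * (t * t + 3 * t) := by
  let T := t * t + 2 * t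
  let classes := univ.image (flipClass L)
  have hsub : flipSeparator G L t ⊆ {Q ∈ classes | #Q < T}.biUnion id ∪
      {Q ∈ classes | T ≤ #Q}.biUnion fun Q => {a | #(nonAdjIn G Q a) < t} := by
    intro a ha
    simp only [flipSeparator, mem_filter, mem_univ, true_and] at ha
    rcases ha with ha | ⟨b, hb, hab⟩
    · exact mem_union_left _ (mem_biUnion.2 ⟨flipClass L a,
        mem_filter.2 ⟨mem_image_of_mem _ (mem_univ a), ha⟩, by simp [flipClass]⟩)
    · exact mem_union_right _ (mem_biUnion.2 ⟨flipClass L b,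
        mem_filter.2 ⟨mem_image_of_mem _ (mem_univ b), hb⟩, by simpa using hab⟩)
  have hsmall := card_biUnion_le_card_mul {Q ∈ classes | #Q < T} id T
    fun Q hQ => (mem_filter.1 hQ).2.le
  have hexc := card_biUnion_le_card_mul {Q ∈ classes | T ≤ #Q} _ t
    fun Q hQ => (card_filter_card_nonAdjIn_lt hG (mem_filter.1 hQ).2).le
  have hclasses := card_image_flipClass_le L
  calc #(flipSeparator G L t)
      ≤ 4 ^ L.length * T + 4 ^ L.length * t :=
        (card_le_card hsub).trans <| (card_union_le _ _).trans <| add_le_add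
          (hsmall.trans (Nat.mul_le_mul_right _ ((card_filter_le _ _).trans hclasses)))
          (hexc.trans (Nat.mul_le_mul_right _ ((card_filter_le _ _).trans hclasses)))
    _ = 4 ^ L.length * (t * t + 3 * t) := by ring

theorem flipProfile_eq_of_mem_nonAdjIn {G : SimpleGraph V} {L : List (Set V × Set V)}
    {a b x : V} (hx : x ∈ nonAdjIn G (flipClass L b) a) : flipProfile L x = flipProfile L b := by
  simp only [nonAdjIn, flipClass, mem_filter, mem_univ, true_and] at hx
  exact hx.1

theorem adj_of_mem_nonAdjIn {G : SimpleGraph V} {L : List (Set V × Set V)} {a b x : V}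
    (hab : FlipParity L a b) (hx : x ∈ nonAdjIn G (flipClass L b) a) :
    (gflipAll G L).Adj a x := by
  have hxb := flipProfile_eq_of_mem_nonAdjIn hx
  simp only [nonAdjIn, mem_filter] at hx
  rw [gflipAll_adj]
  exact ⟨hx.2.1.symm, Or.inr ⟨(flipParity_congr_of_flipProfile rfl hxb).2 hab, hx.2.2⟩⟩

theorem exists_gflipAll_walk_length_le_three {G : SimpleGraph V} {L : List (Set V × Set V)}
    {t : ℕ} (hG : ¬HasBiclique G t) {a b : V} (ha : a ∉ flipSeparator G L t)
    (hb : b ∉ flipSeparator G L t) (hab : G.Adj a b) :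
    ∃ w : (gflipAll G L).Walk a b, w.length ≤ 3 := by
  by_cases hpar : FlipParity L a b
  swap
  · exact ⟨((gflipAll_adj G L a b).2 ⟨hab.ne, Or.inl ⟨hab, hpar⟩⟩).toWalk, by simp⟩
  have hpar' := (flipParity_comm L a b).1 hpar
  simp only [flipSeparator, mem_filter, mem_univ, true_and, not_or, not_exists, not_and,
    not_lt] at ha hb
  set X := nonAdjIn G (flipClass L b) a
  set Y := nonAdjIn G (flipClass L a) b
  by_cases hXY : Disjoint X Y
  · obtain ⟨x, hx, y, hy, hxy⟩ :=
      exists_not_adj_of_not_hasBiclique hG (ha.2 b hb.1) (hb.2 a ha.1) hXY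
    have hxy' : (gflipAll G L).Adj x y := by
      rw [gflipAll_adj, flipParity_congr_of_flipProfile (flipProfile_eq_of_mem_nonAdjIn hx)
        (flipProfile_eq_of_mem_nonAdjIn hy)]
      exact ⟨fun h => disjoint_left.1 hXY hx (h ▸ hy), Or.inr ⟨hpar', hxy⟩⟩
    exact ⟨.cons (adj_of_mem_nonAdjIn hpar hx) <| .cons hxy' <|
      .cons (adj_of_mem_nonAdjIn hpar' hy).symm .nil, by simp⟩
  · obtain ⟨x, hx, hy⟩ := not_disjoint_iff.1 hXY
    exact ⟨.cons (adj_of_mem_nonAdjIn hpar hx) <|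
      .cons (adj_of_mem_nonAdjIn hpar' hy).symm .nil, by simp⟩

end Separator

theorem exists_walk_avoiding {G H : SimpleGraph V} {S : Set V}
    (h : ∀ a b, a ∉ S → H.Adj a b → G.Adj a b ∧ b ∉ S) {u v : V} (hu : u ∉ S)
    (p : H.Walk u v) : ∃ q : G.Walk u v, q.length = p.length ∧ ∀ x ∈ q.support, x ∉ S := by
  induction p with
  | nil => exact ⟨.nil, rfl, by simpa using hu⟩
  | cons hadj p ih =>
    obtain ⟨hadj', hv⟩ := h _ _ hu hadj
    obtain ⟨q, hq, hqS⟩ := ih hv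
    exact ⟨.cons hadj' q, by simp [hq], by simpa [hu] using hqS⟩

def isolatingFlips (G : SimpleGraph V) (S : List V) : List (Set V × Set V) :=
  S.map fun w => ({w}, G.neighborSet w)

theorem flipParity_isolatingFlips {G : SimpleGraph V} {S : List V} (hS : S.Nodup) {u v : V}
    (hu : u ∉ S) : FlipParity (isolatingFlips G S) u v ↔ v ∈ S ∧ G.Adj u v := by
  induction S with
  | nil => simp [isolatingFlips, FlipParity]
  | cons w S ih =>
    rw [List.nodup_cons] at hS
    rw [List.mem_cons, not_or] at hu
    change Xor (Toggles _ u v) (FlipParity (isolatingFlips G S) u v) ↔ _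
    rw [ih hS.2 hu.2]
    by_cases hvw : v = w
    · subst hvw
      simp [Toggles, xor_def, hu.1, hS.1, G.adj_comm]
    · simp [Toggles, hu.1, hvw]

theorem adj_gflipAll_isolatingFlips {G : SimpleGraph V} {S : List V} (hS : S.Nodup) {u v : V}
    (hu : u ∉ S) : (gflipAll G (isolatingFlips G S)).Adj u v ↔ G.Adj u v ∧ v ∉ S := by
  rw [gflipAll_adj, flipParity_isolatingFlips hS hu, xor_def]
  have : G.Adj u v → u ≠ v := Adj.ne
  tauto

theorem RIndepAvoid.not_adj {G : SimpleGraph V} {r : ℕ} {S B : Set V} (h : RIndepAvoid G r S B)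
    (hr : 1 ≤ r) {u v : V} (hu : u ∈ B) (hv : v ∈ B) (huS : u ∉ S) (hvS : v ∉ S) (huv : u ≠ v) :
    ¬G.Adj u v := fun hadj => by
  have := h u hu v hv huv hadj.toWalk (by simp [huS, hvS])
  simp only [Walk.length_cons, Walk.length_nil] at this
  omega

theorem RIndepAvoid.not_adj_of_adj {G : SimpleGraph V} {r : ℕ} {S B : Set V}
    (h : RIndepAvoid G r S B) (hr : 2 ≤ r) {u v y : V} (hu : u ∈ B) (hv : v ∈ B) (huS : u ∉ S)
    (hvS : v ∉ S) (hyS : y ∉ S) (huv : u ≠ v) (huy : G.Adj u y) : ¬G.Adj y v := fun hyv => by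
  have := h u hu v hv huv (.cons huy hyv.toWalk) (by simp [huS, hvS, hyS])
  simp only [Walk.length_cons, Walk.length_nil] at this
  omega

section GraphClass

variable {C : ∀ n : ℕ, SimpleGraph (Fin n) → Prop} {s : ℕ} {N : ℕ → ℕ → ℕ}

theorem sff_of_uaw (h : UAW C s N) : SFF C s N := by
  intro r m n G hG A hA
  obtain ⟨S, hS, B, hBA, hB, hBS, hBind⟩ := h r m n G hG A hA
  refine ⟨isolatingFlips G S.toList, by simpa [isolatingFlips] using hS, B, hBA, hB,
    fun u hu v hv huv p => ?_⟩
  have hflip : ∀ a b, a ∉ (S : Set (Fin n)) → (gflipAll G (isolatingFlips G S.toList)).Adj a b →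
      G.Adj a b ∧ b ∉ (S : Set (Fin n)) := fun a b ha hab => by
    simpa using (adj_gflipAll_isolatingFlips S.nodup_toList (by simpa using ha)).1 hab
  obtain ⟨q, hq, hqS⟩ := exists_walk_avoiding hflip (disjoint_left.1 hBS hu) p
  exact hq ▸ hBind u hu v hv huv q hqS

theorem weaklySparse_of_uaw (h : UAW C s N) : WeaklySparse C := by
  refine ⟨max (N 2 2) s + 1, fun n G hG ⟨X, Y, hXY, hX, hY, hadj⟩ => ?_⟩
  obtain ⟨S, hS, B, hBA, hB, hBS, hBind⟩ :=
    h 2 2 n G hG (X ∪ Y) (by rw [card_union_of_disjoint hXY]; omega)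
  obtain ⟨u, hu, v, hv, huv⟩ := one_lt_card.1 hB
  have huS := disjoint_left.1 hBS hu
  have hvS := disjoint_left.1 hBS hv
  obtain ⟨x, hx, hxS⟩ := exists_mem_notMem_of_card_lt_card (s := S) (t := X) (by omega)
  obtain ⟨y, hy, hyS⟩ := exists_mem_notMem_of_card_lt_card (s := S) (t := Y) (by omega)
  rcases mem_union.1 (hBA hu) with huX | huY <;> rcases mem_union.1 (hBA hv) with hvX | hvY
  · exact hBind.not_adj_of_adj le_rfl hu hv huS hvS hyS huv (hadj u huX y hy)
      (hadj v hvX y hy).symm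
  · exact hBind.not_adj one_le_two hu hv huS hvS huv (hadj u huX v hvY)
  · exact hBind.not_adj one_le_two hu hv huS hvS huv (hadj v hvX u huY).symm
  · exact hBind.not_adj_of_adj le_rfl hu hv huS hvS hxS huv (hadj x hx u huY).symm
      (hadj x hx v hvY)

theorem uaw_of_not_hasBiclique_of_sff {t : ℕ}
    (hws : ∀ n (G : SimpleGraph (Fin n)), C n G → ¬HasBiclique G t) (hsff : SFF C s N) :
    UAW C (4 ^ s * (t * t + 3 * t)) fun r m => N (3 * r) (m + 4 ^ s * (t * t + 3 * t)) := by
  intro r m n G hG A hA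
  obtain ⟨L, hL, B, hBA, hB, hBind⟩ := hsff (3 * r) _ n G hG A hA
  set S := flipSeparator G L t
  have hS : #S ≤ 4 ^ s * (t * t + 3 * t) := (card_flipSeparator_le (hws n G hG) L).trans
    (Nat.mul_le_mul_right _ (Nat.pow_le_pow_right (by norm_num) hL))
  refine ⟨S, hS, B \ S, sdiff_subset.trans hBA, ?_, sdiff_disjoint, ?_⟩
  · have := card_le_card_sdiff_add_card (s := B) (t := S)
    omega
  · intro u hu v hv huv q hq
    obtain ⟨w, hw⟩ := exists_walk_length_le_mul_length
      (fun a b => exists_gflipAll_walk_length_le_three (hws n G hG)) q hq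
    have := hBind u (mem_sdiff.1 hu).1 v (mem_sdiff.1 hv).1 huv w
    omega

end GraphClass

/-- Main theorem: a class of graphs is weakly sparse and strongly flip-flat if and only
if it is uniformly almost-wide. -/
theorem weaklySparse_and_sff_iff_uaw (C : ∀ n : ℕ, SimpleGraph (Fin n) → Prop) :
    (WeaklySparse C ∧ StronglyFlipFlat C) ↔ UniformlyAlmostWide C :=
  ⟨fun ⟨⟨_, hws⟩, _, _, hsff⟩ => ⟨_, _, uaw_of_not_hasBiclique_of_sff hws hsff⟩,
    fun ⟨s, N, h⟩ => ⟨weaklySparse_of_uaw h, s, N, sff_of_uaw h⟩⟩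
end
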